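/- arXiv:1901.04100 — 3 statements merged into one kernel-verified Lean document; each statement's English description precedes it below -/
import Mathlib

section
/- Let γ and λ be positive integers with γ < λ. Let M be uniformly distributed on {0,1,...,2^γ − 1} and R be uniformly distributed on {0,1,...,2^λ − 1}, with M and R independent, and let the ciphertext be C = M + R (integer addition). Then for every function A : ℕ → ℕ (an adversary guessing the plaintext from the ciphertext), Pr[A(M + R) = M] − 1/2^γ ≤ 1/2^(λ−γ−1). -/
/-!
Fix a ciphertext `c`. Given the message, the pad is determined by `c`, so at most one pair `(M, R)`
with ciphertext `c` is one the adversary's single guess `A c` gets right. Hence the number of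
successful pairs is at most the number of ciphertexts, fewer than `2^γ + 2^λ`, and the success
probability is at most `(2^γ + 2^λ) / 2^(γ+λ) = 1/2^γ + 1/2^λ`; the advantage `1/2^λ` is
below `1/2^(λ-γ-1)`.
-/

open Finset

theorem card_filter_guess_eq_le {α β γ δ : Type*} [Fintype α] [Fintype β]
    (enc : α → β → γ) (henc : ∀ m, Function.Injective (enc m))
    (f : α → δ) (hf : Function.Injective f) [DecidableEq δ] (A : γ → δ)
    (t : Finset γ) (ht : ∀ m r, enc m r ∈ t) :
    (univ.filter fun p : α × β => A (enc p.1 p.2) = f p.1).card ≤ t.card := by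
  refine card_le_card_of_injOn (fun p => enc p.1 p.2) (fun p _ => ht p.1 p.2) ?_
  rintro ⟨m, r⟩ hp ⟨m', r'⟩ hp' hc
  simp only [coe_filter, mem_univ, true_and, Set.mem_ofPred_eq] at hp hp' hc
  obtain rfl : m = m' := hf (by rw [← hp, ← hp', hc])
  rw [henc m hc]

theorem card_filter_guess_add_eq_le (n k : ℕ) (A : ℕ → ℕ) :
    (univ.filter fun p : Fin n × Fin k => A ((p.1 : ℕ) + (p.2 : ℕ)) = (p.1 : ℕ)).card ≤ n + k := by
  simpa using card_filter_guess_eq_le (fun (m : Fin n) (r : Fin k) => (m : ℕ) + r)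
    (fun m => (add_right_injective (m : ℕ)).comp Fin.val_injective) Fin.val Fin.val_injective A
    (range (n + k)) (fun m r => mem_range.2 (by omega))

theorem div_mul_sub_one_div_le {K : Type*} [Field K] [LinearOrder K] [IsStrictOrderedRing K]
    {a b c : K} (ha : 0 < a) (hb : 0 < b) (h : c ≤ a + b) :
    c / (a * b) - 1 / a ≤ 1 / b :=
  calc c / (a * b) - 1 / a ≤ (a + b) / (a * b) - 1 / a := by gcongr
    _ = 1 / b := by field_simp; ring

theorem lepcnn_security_general (γ lam : ℕ)
    (A : ℕ → ℕ) :
    ((Finset.univ.filter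
        (fun p : Fin (2 ^ γ) × Fin (2 ^ lam) =>
          A ((p.1 : ℕ) + (p.2 : ℕ)) = (p.1 : ℕ))).card : ℝ) /
        ((2 : ℝ) ^ γ * 2 ^ lam) - 1 / 2 ^ γ ≤ 1 / 2 ^ (lam - γ - 1) := by
  have hcard := card_filter_guess_add_eq_le (2 ^ γ) (2 ^ lam) A
  calc _ ≤ 1 / (2 : ℝ) ^ lam :=
        div_mul_sub_one_div_le (by positivity) (by positivity) (by exact_mod_cast hcard)
    _ ≤ 1 / 2 ^ (lam - γ - 1) := one_div_pow_le_one_div_pow_of_le one_le_two (by omega)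

/-- LEP-CNN Theorem 1 (security of one-time additive masking):
`M` uniform on `{0,…,2^γ−1}`, `R` uniform on `{0,…,2^λ−1}` independent,
ciphertext `C = M + R` (integer addition).  For any adversary
`A : ℕ → ℕ`, `Pr[A(M+R) = M] − 1/2^γ ≤ 1/2^(λ−γ−1)`.
The probability is taken over the uniform distribution on the pair `(M, R)`. -/
theorem lepcnn_security (γ lam : ℕ) (hγ : 0 < γ) (hlam : 0 < lam) (hγlam : γ < lam)
    (A : ℕ → ℕ) :
    ((Finset.univ.filter
        (fun p : Fin (2 ^ γ) × Fin (2 ^ lam) =>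
          A ((p.1 : ℕ) + (p.2 : ℕ)) = (p.1 : ℕ))).card : ℝ) /
        ((2 : ℝ) ^ γ * 2 ^ lam) - 1 / 2 ^ γ ≤ 1 / 2 ^ (lam - γ - 1) :=
  lepcnn_security_general γ lam A
end

section
/- Let γ and λ be positive integers with γ < λ. Let M be uniformly distributed on {0,1,...,2^γ − 1} and R be uniformly distributed on {0,1,...,2^λ − 1}, with M and R independent. Then for every function A : ℕ → ℕ, Pr[A(M + R) = M] ≤ 1/2^γ + (1 − 1/2^γ) · (1/2^(λ−γ−1)). -/
/-!
The adversary's guess `A (m + r)` depends only on the sum `m + r`, and the sum together with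
`m` determines `r`. Hence a winning pair `(m, r)` is determined by its sum, so there are fewer
than `2^γ + 2^λ` of them, and the success probability is at most `1/2^γ + 1/2^λ`. The bound
follows since `1/2^λ ≤ 1/2^(λ-γ) = (1/2) · 1/2^(λ-γ-1)` and `1/2 ≤ 1 - 1/2^γ` for `γ ≥ 1`.
-/

open Finset

theorem injOn_val_add_of_guess_eq {a b : ℕ} (A : ℕ → ℕ) :
    Set.InjOn (fun p : Fin a × Fin b => (p.1 : ℕ) + p.2)
      {p | A (p.1 + p.2) = p.1} := by
  intro p hp q hq hpq
  simp only at hpq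
  have hfst : (p.1 : ℕ) = q.1 := by rw [← hp, ← hq, hpq]
  have hsnd : (p.2 : ℕ) = q.2 := by omega
  exact Prod.ext (Fin.ext hfst) (Fin.ext hsnd)

theorem card_filter_guess_eq_le_s1 (a b : ℕ) (A : ℕ → ℕ) :
    #{p : Fin a × Fin b | A (p.1 + p.2) = p.1} ≤ a + b := by
  calc #{p : Fin a × Fin b | A (p.1 + p.2) = p.1}
      ≤ #(range (a + b)) :=
        card_le_card_of_injOn (fun p => (p.1 : ℕ) + p.2)
          (fun p _ => mem_range.2 (by simp only; omega)) (by simpa using injOn_val_add_of_guess_eq A)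
    _ = a + b := card_range _

theorem one_div_two_pow_le_mul_one_div_two_pow {γ lam : ℕ} (hγ : 0 < γ) (hγlam : γ < lam) :
    (1 : ℝ) / 2 ^ lam ≤ (1 - 1 / 2 ^ γ) * (1 / 2 ^ (lam - γ - 1)) := by
  have half_le : (1 : ℝ) / 2 ≤ 1 - 1 / 2 ^ γ := by
    have : (1 : ℝ) / 2 ^ γ ≤ 1 / 2 ^ 1 := one_div_pow_le_one_div_pow_of_le one_le_two hγ
    linarith
  calc (1 : ℝ) / 2 ^ lam
      ≤ 1 / 2 ^ (lam - γ) :=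
        one_div_pow_le_one_div_pow_of_le one_le_two (Nat.sub_le lam γ)
    _ = 1 / 2 ^ (lam - γ - 1 + 1) := by congr 2; omega
    _ = 1 / 2 * (1 / 2 ^ (lam - γ - 1)) := by rw [pow_succ]; ring
    _ ≤ (1 - 1 / 2 ^ γ) * (1 / 2 ^ (lam - γ - 1)) := by gcongr

theorem lepcnn_guess_bound_general (γ lam : ℕ) (hγ : 0 < γ) (hγlam : γ < lam)
    (A : ℕ → ℕ) :
    ((Finset.univ.filter
        (fun p : Fin (2 ^ γ) × Fin (2 ^ lam) =>
          A ((p.1 : ℕ) + (p.2 : ℕ)) = (p.1 : ℕ))).card : ℝ) /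
        ((2 : ℝ) ^ γ * 2 ^ lam) ≤
      1 / 2 ^ γ + (1 - 1 / 2 ^ γ) * (1 / 2 ^ (lam - γ - 1)) := by
  have hcard : (#{p : Fin (2 ^ γ) × Fin (2 ^ lam) | A (p.1 + p.2) = p.1} : ℝ)
      ≤ 2 ^ γ + 2 ^ lam := by
    exact_mod_cast card_filter_guess_eq_le_s1 (2 ^ γ) (2 ^ lam) A
  calc _ ≤ ((2 : ℝ) ^ γ + 2 ^ lam) / (2 ^ γ * 2 ^ lam) := by gcongr
    _ = 1 / 2 ^ γ + 1 / 2 ^ lam := by field_simp; ring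
    _ ≤ _ := by gcongr; exact one_div_two_pow_le_mul_one_div_two_pow hγ hγlam

/-- Intermediate bound in the LEP-CNN security analysis:
`M` uniform on `{0,…,2^γ−1}`, `R` uniform on `{0,…,2^λ−1}` independent.
For any adversary `A : ℕ → ℕ`,
`Pr[A(M+R) = M] ≤ 1/2^γ + (1 − 1/2^γ)·(1/2^(λ−γ−1))`. -/
theorem lepcnn_guess_bound (γ lam : ℕ) (hγ : 0 < γ) (hlam : 0 < lam) (hγlam : γ < lam)
    (A : ℕ → ℕ) :
    ((Finset.univ.filter
        (fun p : Fin (2 ^ γ) × Fin (2 ^ lam) =>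
          A ((p.1 : ℕ) + (p.2 : ℕ)) = (p.1 : ℕ))).card : ℝ) /
        ((2 : ℝ) ^ γ * 2 ^ lam) ≤
      1 / 2 ^ γ + (1 - 1 / 2 ^ γ) * (1 / 2 ^ (lam - γ - 1)) :=
  lepcnn_guess_bound_general γ lam hγ hγlam A
end

section
/- Let γ and λ be positive integers with γ < λ. Let M be uniformly distributed on {0,1,...,2^γ − 1} and R be uniformly distributed on {0,1,...,2^λ − 1}, with M and R independent, and let C = M + R. Then for every integer c with 2^γ − 1 ≤ c ≤ 2^λ − 1 and every m ∈ {0,1,...,2^γ − 1}, the conditional probability Pr[M = m | M + R = c] = 1/2^γ. In particular, conditioned on such an in-range ciphertext value, M remains uniformly distributed on {0,1,...,2^γ − 1}. -/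
/-!
For an in-range ciphertext `c`, every plaintext `m < 2^γ` is completed to `c` by exactly one
pad `c - m < 2^λ`. Hence the event `M + R = c` consists of `2^γ` equally likely pairs, exactly
one of which has `M = m`.
-/

open Finset

section

variable {a b c : ℕ}

theorem card_filter_fin_fst_eq_and_add_eq {m : ℕ} (hm : m < a) (hmc : m ≤ c) (hcb : c < m + b) :
    #{p : Fin a × Fin b | (p.1 : ℕ) = m ∧ (p.1 : ℕ) + p.2 = c} = 1 := by
  rw [card_eq_one]
  refine ⟨(⟨m, hm⟩, ⟨c - m, by omega⟩), ?_⟩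
  ext ⟨i, j⟩
  simp only [mem_filter, mem_univ, true_and, mem_singleton, Prod.mk.injEq, Fin.ext_iff]
  omega

theorem card_filter_fin_add_eq (hac : a ≤ c + 1) (hcb : c < b) :
    #{p : Fin a × Fin b | (p.1 : ℕ) + p.2 = c} = a := by
  -- `a ≤ c + 1` keeps the subtraction `c - i` untruncated for every `i : Fin a`.
  refine (card_nbij' (t := univ) Prod.fst (fun i : Fin a => (i, ⟨c - i, by omega⟩))
    ?_ ?_ ?_ ?_).trans (card_fin a)
  · simp
  · intro i _
    simp only [coe_filter, mem_univ, true_and, Set.mem_ofPred_eq]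
    omega
  · rintro ⟨i, j⟩ hp
    simp only [coe_filter, mem_univ, true_and, Set.mem_ofPred_eq] at hp
    simp only [Prod.mk.injEq, Fin.ext_iff, true_and]
    omega
  · exact fun _ _ => rfl

end

theorem lepcnn_conditional_uniform_general (γ lam : ℕ) (c m : ℕ) (hc₁ : 2 ^ γ - 1 ≤ c)
    (hc₂ : c ≤ 2 ^ lam - 1) (hm : m < 2 ^ γ) :
    ((Finset.univ.filter
        (fun p : Fin (2 ^ γ) × Fin (2 ^ lam) =>
          (p.1 : ℕ) = m ∧ (p.1 : ℕ) + (p.2 : ℕ) = c)).card : ℝ) /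
      ((Finset.univ.filter
        (fun p : Fin (2 ^ γ) × Fin (2 ^ lam) =>
          (p.1 : ℕ) + (p.2 : ℕ) = c)).card : ℝ) = 1 / 2 ^ γ := by
  have h2γ := Nat.one_le_two_pow (n := γ)
  have h2lam := Nat.one_le_two_pow (n := lam)
  rw [card_filter_fin_fst_eq_and_add_eq hm (by omega) (by omega),
    card_filter_fin_add_eq (by omega) (by omega)]
  push_cast
  rfl

/-- Conditional uniformity of the plaintext given an in-range ciphertext:
for any ciphertext value `c` with `2^γ − 1 ≤ c ≤ 2^λ − 1` and any plaintext
`m < 2^γ`, `Pr[M = m ∣ M + R = c] = 1/2^γ`, where `M` is uniform on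
`{0,…,2^γ−1}` and `R` is uniform on `{0,…,2^λ−1}`, independent.
The conditional probability is expressed as the ratio of the number of pairs
realizing both events to the number of pairs realizing the conditioning event. -/
theorem lepcnn_conditional_uniform (γ lam : ℕ) (hγ : 0 < γ) (hlam : 0 < lam)
    (hγlam : γ < lam) (c m : ℕ) (hc₁ : 2 ^ γ - 1 ≤ c) (hc₂ : c ≤ 2 ^ lam - 1)
    (hm : m < 2 ^ γ) :
    ((Finset.univ.filter
        (fun p : Fin (2 ^ γ) × Fin (2 ^ lam) =>
          (p.1 : ℕ) = m ∧ (p.1 : ℕ) + (p.2 : ℕ) = c)).card : ℝ) /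
      ((Finset.univ.filter
        (fun p : Fin (2 ^ γ) × Fin (2 ^ lam) =>
          (p.1 : ℕ) + (p.2 : ℕ) = c)).card : ℝ) = 1 / 2 ^ γ :=
  lepcnn_conditional_uniform_general γ lam c m hc₁ hc₂ hm
end
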